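/- Under the stated setup, if |λ₁| > |λ₂| and D₇ ≠ 0, then CV⁺(h) ≠ 0 for all sufficiently large h and lim_{h→∞} CD⁺(h)/CV⁺(h) = 0; that is, the cross-codifference at positive lags is asymptotically negligible relative to the cross-covariation. -/

import Mathlib

open MeasureTheory Filter Topology

/-- The signed power `x^⟨p⟩ = |x|^p · sign x`. -/
noncomputable def spow (x p : ℝ) : ℝ := |x| ^ p * Real.sign x

/-- The unit sphere `S₂ ⊆ ℝ²`. -/
abbrev Sphere2 : Type := {s : ℝ × ℝ // s.1 ^ 2 + s.2 ^ 2 = 1}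

noncomputable def A3 (a1 a2 a3 a4 l1 l2 : ℝ) (j : ℕ) (s : Sphere2) : ℝ :=
  (-(l1 ^ j * a3 * s.1.1) + l2 * l1 ^ j * s.1.2 - l1 ^ j * a4 * s.1.2) / (l2 - l1)

noncomputable def B3 (a1 a2 a3 a4 l1 l2 : ℝ) (j : ℕ) (s : Sphere2) : ℝ :=
  (l2 ^ j * a3 * s.1.1 - l1 * l2 ^ j * s.1.2 + l2 ^ j * a4 * s.1.2) / (l2 - l1)

noncomputable def C3 (a1 a2 a3 a4 l1 l2 : ℝ) (j : ℕ) (s : Sphere2) : ℝ :=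
  (l1 ^ j * (l2 * s.1.1 - a1 * s.1.1 - a2 * s.1.2)
    + l2 ^ j * (-(l1 * s.1.1) + a1 * s.1.1 + a2 * s.1.2)) / (l2 - l1)

/-- The cross-codifference `CD(X₁(t), X₂(t+h))` of the bidimensional α-stable AR(1) model. -/
noncomputable def CDpos (Γ : Measure Sphere2) (α a1 a2 a3 a4 l1 l2 : ℝ) (h : ℕ) : ℝ :=
  ∑' j : ℕ, ∫ s,
    (|l1 ^ h * A3 a1 a2 a3 a4 l1 l2 j s + l2 ^ h * B3 a1 a2 a3 a4 l1 l2 j s| ^ α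
      + |C3 a1 a2 a3 a4 l1 l2 j s| ^ α
      - |C3 a1 a2 a3 a4 l1 l2 j s - (l1 ^ h * A3 a1 a2 a3 a4 l1 l2 j s + l2 ^ h * B3 a1 a2 a3 a4 l1 l2 j s)| ^ α) ∂Γ

/-- The cross-covariation `CV(X₁(t), X₂(t+h))` of the bidimensional α-stable AR(1) model. -/
noncomputable def CVpos (Γ : Measure Sphere2) (α a1 a2 a3 a4 l1 l2 : ℝ) (h : ℕ) : ℝ :=
  ∑' j : ℕ, ∫ s,
    C3 a1 a2 a3 a4 l1 l2 j s * spow (l1 ^ h * A3 a1 a2 a3 a4 l1 l2 j s + l2 ^ h * B3 a1 a2 a3 a4 l1 l2 j s) (α - 1) ∂Γ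

noncomputable def D4 (Γ : Measure Sphere2) (α a1 a2 a3 a4 l1 l2 : ℝ) : ℝ :=
  ∑' j : ℕ, ∫ s, A3 a1 a2 a3 a4 l1 l2 j s * spow (C3 a1 a2 a3 a4 l1 l2 j s) (α - 1) ∂Γ

noncomputable def D5 (Γ : Measure Sphere2) (α a1 a2 a3 a4 l1 l2 : ℝ) : ℝ :=
  ∑' j : ℕ, ∫ s, B3 a1 a2 a3 a4 l1 l2 j s * spow (C3 a1 a2 a3 a4 l1 l2 j s) (α - 1) ∂Γ

noncomputable def D7 (Γ : Measure Sphere2) (α a1 a2 a3 a4 l1 l2 : ℝ) : ℝ :=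
  ∑' j : ℕ, ∫ s, C3 a1 a2 a3 a4 l1 l2 j s * spow (A3 a1 a2 a3 a4 l1 l2 j s) (α - 1) ∂Γ

noncomputable def D8 (Γ : Measure Sphere2) (α a1 a2 a3 a4 l1 l2 : ℝ) : ℝ :=
  ∑' j : ℕ, ∫ s, C3 a1 a2 a3 a4 l1 l2 j s * spow (B3 a1 a2 a3 a4 l1 l2 j s) (α - 1) ∂Γ


lemma sign_mul' (x y : ℝ) : Real.sign (x * y) = Real.sign x * Real.sign y := by
  rcases lt_trichotomy x 0 with hx | hx | hx <;> rcases lt_trichotomy y 0 with hy | hy | hy <;>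
    simp [hx, hy, Real.sign_of_neg, Real.sign_of_pos, Real.sign_zero, mul_pos, mul_neg_of_pos_of_neg,
      mul_neg_of_neg_of_pos, mul_pos_of_neg_of_neg] <;>
  first
  | exact Real.sign_of_pos (mul_pos_of_neg_of_neg hx hy)
  | exact Real.sign_of_neg (mul_neg_of_neg_of_pos hx hy)
  | exact Real.sign_of_neg (mul_neg_of_pos_of_neg hx hy)
  | exact Real.sign_of_pos (mul_pos hx hy)

lemma spow_mul (x y p : ℝ) : spow (x * y) p = spow x p * spow y p := by
  unfold spow
  rw [abs_mul, Real.mul_rpow (abs_nonneg x) (abs_nonneg y), sign_mul']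
  ring

lemma abs_sign_le (x : ℝ) : |Real.sign x| ≤ 1 := by
  rcases lt_trichotomy x 0 with hx | hx | hx <;>
    simp [Real.sign_of_neg, Real.sign_of_pos, hx]

lemma abs_spow_le (x p : ℝ) : |spow x p| ≤ |x| ^ p := by
  unfold spow
  rw [abs_mul, abs_of_nonneg (Real.rpow_nonneg (abs_nonneg x) p)]
  calc |x| ^ p * |Real.sign x| ≤ |x| ^ p * 1 :=
        mul_le_mul_of_nonneg_left (abs_sign_le x) (Real.rpow_nonneg (abs_nonneg x) p)
    _ = |x| ^ p := mul_one _

lemma abs_spow_of_ne_zero {x : ℝ} (hx : x ≠ 0) (p : ℝ) : |spow x p| = |x| ^ p := by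
  unfold spow
  rcases hx.lt_or_gt with h | h <;>
    simp [Real.sign_of_neg, Real.sign_of_pos, h, abs_mul,
      abs_of_nonneg (Real.rpow_nonneg (abs_nonneg x) p)]

lemma spow_ne_zero {x : ℝ} (hx : x ≠ 0) {p : ℝ} : spow x p ≠ 0 := by
  intro h
  have h1 := abs_spow_of_ne_zero hx p
  rw [h, abs_zero] at h1
  exact (Real.rpow_pos_of_pos (abs_pos.2 hx) p).ne' h1.symm

lemma continuous_spow {p : ℝ} (hp : 0 < p) : Continuous fun x : ℝ => spow x p := by
  rw [continuous_iff_continuousAt]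
  intro x
  rcases lt_trichotomy x 0 with hx | hx | hx
  · have hev : ∀ᶠ y in 𝓝 x, -(|y| ^ p) = spow y p := by
      filter_upwards [eventually_lt_nhds hx] with y hy
      simp [spow, Real.sign_of_neg hy]
    exact ContinuousAt.congr (((continuous_abs.rpow_const (fun _ => Or.inr hp.le)).neg).continuousAt) hev
  · subst hx
    have h0 : spow 0 p = 0 := by simp [spow]
    rw [ContinuousAt, h0]
    apply squeeze_zero_norm (abs_spow_le · p)
    have : Tendsto (fun y : ℝ => |y| ^ p) (𝓝 0) (𝓝 (|(0:ℝ)| ^ p)) :=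
      ((continuous_abs.rpow_const (fun _ => Or.inr hp.le))).continuousAt
    simpa [Real.zero_rpow hp.ne'] using this
  · have hev : ∀ᶠ y in 𝓝 x, |y| ^ p = spow y p := by
      filter_upwards [eventually_gt_nhds hx] with y hy
      simp [spow, Real.sign_of_pos hy]
    exact ContinuousAt.congr ((continuous_abs.rpow_const (fun _ => Or.inr hp.le)).continuousAt) hev

lemma rpow_sub_rpow_le {a b p : ℝ} (hb : 0 ≤ b) (hab : b ≤ a) (hp : 1 ≤ p) :
    a ^ p - b ^ p ≤ p * a ^ (p - 1) * (a - b) := by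
  rcases eq_or_lt_of_le (hb.trans hab) with ha | ha
  · have hb0 : b = 0 := le_antisymm (hab.trans_eq ha.symm) hb
    have ha0 : a = 0 := ha.symm
    simp [ha0, hb0, Real.zero_rpow (by linarith : p ≠ 0)]
  · have ht1 : -1 ≤ b / a - 1 := by
      have : 0 ≤ b / a := div_nonneg hb ha.le
      linarith
    have hbern := one_add_mul_self_le_rpow_one_add ht1 hp
    have he : (1 + (b / a - 1)) = b / a := by ring
    rw [he, Real.div_rpow hb ha.le] at hbern
    have hap : (0:ℝ) < a ^ p := Real.rpow_pos_of_pos ha p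
    have h2 : (1 + p * (b / a - 1)) * a ^ p ≤ b ^ p := (le_div_iff₀ hap).mp hbern
    have hsplit : a ^ p = a ^ (p - 1) * a := by
      rw [← Real.rpow_add_one ha.ne' (p - 1), sub_add_cancel]
    have key : (b / a - 1) * a = b - a := by field_simp
    have h3 : (b / a - 1) * a ^ p = (b - a) * a ^ (p - 1) := by
      rw [hsplit]
      calc (b / a - 1) * (a ^ (p - 1) * a) = ((b / a - 1) * a) * a ^ (p - 1) := by ring
        _ = (b - a) * a ^ (p - 1) := by rw [key]
    have h2' : a ^ p + p * ((b - a) * a ^ (p - 1)) ≤ b ^ p := by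
      calc a ^ p + p * ((b - a) * a ^ (p - 1)) = (1 + p * (b / a - 1)) * a ^ p := by
            rw [← h3]; ring
        _ ≤ b ^ p := h2
    nlinarith

lemma abs_rpow_sub_rpow_le' {a b p : ℝ} (hb : 0 ≤ b) (hab : b ≤ a) (hp : 1 ≤ p) :
    |a ^ p - b ^ p| ≤ p * (a + b) ^ (p - 1) * |a - b| := by
  have ha : 0 ≤ a := hb.trans hab
  have h1 : 0 ≤ a ^ p - b ^ p :=
    sub_nonneg.2 (Real.rpow_le_rpow hb hab (by linarith))
  rw [abs_of_nonneg h1, abs_of_nonneg (sub_nonneg.2 hab)]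
  calc a ^ p - b ^ p ≤ p * a ^ (p - 1) * (a - b) := rpow_sub_rpow_le hb hab hp
    _ ≤ p * (a + b) ^ (p - 1) * (a - b) := by
        apply mul_le_mul_of_nonneg_right _ (sub_nonneg.2 hab)
        apply mul_le_mul_of_nonneg_left _ (by linarith)
        exact Real.rpow_le_rpow ha (by linarith) (by linarith)

lemma abs_rpow_sub_rpow_le {a b p : ℝ} (ha : 0 ≤ a) (hb : 0 ≤ b) (hp : 1 ≤ p) :
    |a ^ p - b ^ p| ≤ p * (a + b) ^ (p - 1) * |a - b| := by
  rcases le_total b a with hab | hab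
  · exact abs_rpow_sub_rpow_le' hb hab hp
  · rw [abs_sub_comm, abs_sub_comm a b, add_comm]
    exact abs_rpow_sub_rpow_le' ha hab hp

lemma pow_rpow_comm {q : ℝ} (hq : 0 ≤ q) (p : ℝ) (j : ℕ) : (q ^ j) ^ p = (q ^ p) ^ j := by
  rw [← Real.rpow_natCast q j, ← Real.rpow_natCast (q ^ p) j, ← Real.rpow_mul hq,
    ← Real.rpow_mul hq, mul_comm]

lemma abs_tsum_le_of_le {f g : ℕ → ℝ} (h : ∀ j, |f j| ≤ g j) (hg : Summable g) :
    |∑' j, f j| ≤ ∑' j, g j := by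
  have hfa : Summable fun j => |f j| := hg.of_nonneg_of_le (fun j => abs_nonneg _) h
  have hf : Summable f := hfa.of_abs
  calc |∑' j, f j| = ‖∑' j, f j‖ := (Real.norm_eq_abs _).symm
    _ ≤ ∑' j, ‖f j‖ := norm_tsum_le_tsum_norm (by simpa [Real.norm_eq_abs] using hfa)
    _ = ∑' j, |f j| := by simp [Real.norm_eq_abs]
    _ ≤ ∑' j, g j := Summable.tsum_le_tsum h hfa hg

lemma abs3 {c1 c2 c3 u v w : ℝ} (hu : |u| ≤ 1) (hv : |v| ≤ 1) (hw : |w| ≤ 1) :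
    |c1 * u + c2 * v + c3 * w| ≤ |c1| + |c2| + |c3| := by
  calc |c1 * u + c2 * v + c3 * w| ≤ |c1 * u| + |c2 * v| + |c3 * w| := abs_add_three _ _ _
    _ = |c1| * |u| + |c2| * |v| + |c3| * |w| := by rw [abs_mul, abs_mul, abs_mul]
    _ ≤ |c1| + |c2| + |c3| := by
        nlinarith [abs_nonneg c1, abs_nonneg c2, abs_nonneg c3, abs_nonneg u, abs_nonneg v, abs_nonneg w]

set_option maxHeartbeats 2000000 in
theorem CD_CV_pos_ratio_tendsto_zero
    (Γ : Measure Sphere2) [IsFiniteMeasure Γ]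
    (α a1 a2 a3 a4 l1 l2 : ℝ) (hα1 : 1 < α) (hα2 : α < 2)
    (hl1 : l1 ^ 2 - (a1 + a4) * l1 + (a1 * a4 - a2 * a3) = 0)
    (hl2 : l2 ^ 2 - (a1 + a4) * l2 + (a1 * a4 - a2 * a3) = 0)
    (hne : l1 ≠ l2) (habs1 : |l1| < 1) (habs2 : |l2| < 1)
    (hgt : |l2| < |l1|) (hD7 : D7 Γ α a1 a2 a3 a4 l1 l2 ≠ 0) :
    (∀ᶠ h : ℕ in atTop, CVpos Γ α a1 a2 a3 a4 l1 l2 h ≠ 0) ∧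
    Tendsto (fun h : ℕ => CDpos Γ α a1 a2 a3 a4 l1 l2 h / CVpos Γ α a1 a2 a3 a4 l1 l2 h) atTop (𝓝 (0 : ℝ)) := by
  haveI : OpensMeasurableSpace Sphere2 :=
    Subtype.opensMeasurableSpace {s : ℝ × ℝ | s.1 ^ 2 + s.2 ^ 2 = 1}
  have hp : 0 < α - 1 := by linarith
  have hq0 : (0:ℝ) < |l1| := lt_of_le_of_lt (abs_nonneg l2) hgt
  have hl1ne : l1 ≠ 0 := abs_pos.mp hq0
  have hq1 : |l1| < 1 := habs1
  set q := |l1| with hqdef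
  set r := l2 / l1 with hrdef
  have hrabs : |r| < 1 := by
    rw [hrdef, abs_div]
    exact (div_lt_one hq0).2 hgt
  have hl2h : ∀ h : ℕ, l2 ^ h = l1 ^ h * r ^ h := by
    intro h
    rw [← mul_pow]
    congr 1
    rw [hrdef]
    field_simp
  have hdpos : (0:ℝ) < |l2 - l1| := abs_pos.2 (sub_ne_zero.2 (Ne.symm hne))
  have hs1 : ∀ s : Sphere2, |s.1.1| ≤ 1 := fun s =>
    (sq_le_one_iff_abs_le_one _).1 (by nlinarith [s.2, sq_nonneg s.1.2])
  have hs2 : ∀ s : Sphere2, |s.1.2| ≤ 1 := fun s =>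
    (sq_le_one_iff_abs_le_one _).1 (by nlinarith [s.2, sq_nonneg s.1.1])
  have hl2q : ∀ n : ℕ, |l2| ^ n ≤ q ^ n := fun n => pow_le_pow_left₀ (abs_nonneg l2) hgt.le n
  have hqj0 : ∀ n : ℕ, (0:ℝ) < q ^ n := fun n => pow_pos hq0 n
  have hqj1 : ∀ n : ℕ, q ^ n ≤ 1 := fun n => pow_le_one₀ hq0.le hq1.le
  -- constants
  set KA : ℝ := (|a3| + |l2| + |a4|) / |l2 - l1| with hKAdef
  set KB : ℝ := (|a3| + |l1| + |a4|) / |l2 - l1| with hKBdef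
  set KC : ℝ := ((|l2| + |a1| + |a2|) + (|l1| + |a1| + |a2|)) / |l2 - l1| with hKCdef
  have hKA : 0 ≤ KA := div_nonneg (by positivity) hdpos.le
  have hKB : 0 ≤ KB := div_nonneg (by positivity) hdpos.le
  have hKC : 0 ≤ KC := div_nonneg (by positivity) hdpos.le
  -- bounds on A3 B3 C3
  have hA : ∀ (j : ℕ) (s : Sphere2), |A3 a1 a2 a3 a4 l1 l2 j s| ≤ KA * q ^ j := by
    intro j s
    have hrw : A3 a1 a2 a3 a4 l1 l2 j s
        = l1 ^ j * ((-a3) * s.1.1 + l2 * s.1.2 + (-a4) * s.1.2) / (l2 - l1) := by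
      unfold A3; ring
    rw [hrw, abs_div, abs_mul, abs_pow]
    have hw := abs3 (c1 := -a3) (c2 := l2) (c3 := -a4) (hs1 s) (hs2 s) (hs2 s)
    rw [abs_neg, abs_neg] at hw
    calc q ^ j * |(-a3) * s.1.1 + l2 * s.1.2 + (-a4) * s.1.2| / |l2 - l1|
        ≤ q ^ j * (|a3| + |l2| + |a4|) / |l2 - l1| := by gcongr
      _ = KA * q ^ j := by rw [hKAdef]; ring
  have hB : ∀ (j : ℕ) (s : Sphere2), |B3 a1 a2 a3 a4 l1 l2 j s| ≤ KB * q ^ j := by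
    intro j s
    have hrw : B3 a1 a2 a3 a4 l1 l2 j s
        = l2 ^ j * (a3 * s.1.1 + (-l1) * s.1.2 + a4 * s.1.2) / (l2 - l1) := by
      unfold B3; ring
    rw [hrw, abs_div, abs_mul, abs_pow]
    have hw := abs3 (c1 := a3) (c2 := -l1) (c3 := a4) (hs1 s) (hs2 s) (hs2 s)
    rw [abs_neg] at hw
    calc |l2| ^ j * |a3 * s.1.1 + (-l1) * s.1.2 + a4 * s.1.2| / |l2 - l1|
        ≤ q ^ j * (|a3| + |l1| + |a4|) / |l2 - l1| := by
          gcongr <;> first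
            | exact abs_nonneg _
            | exact hgt.le
            | exact hw
      _ = KB * q ^ j := by rw [hKBdef]; ring
  have hC : ∀ (j : ℕ) (s : Sphere2), |C3 a1 a2 a3 a4 l1 l2 j s| ≤ KC * q ^ j := by
    intro j s
    have hrw : C3 a1 a2 a3 a4 l1 l2 j s
        = (l1 ^ j * (l2 * s.1.1 + (-a1) * s.1.1 + (-a2) * s.1.2)
            + l2 ^ j * ((-l1) * s.1.1 + a1 * s.1.1 + a2 * s.1.2)) / (l2 - l1) := by
      unfold C3; ring
    have hw1 := abs3 (c1 := l2) (c2 := -a1) (c3 := -a2) (hs1 s) (hs1 s) (hs2 s)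
    have hw2 := abs3 (c1 := -l1) (c2 := a1) (c3 := a2) (hs1 s) (hs1 s) (hs2 s)
    rw [abs_neg, abs_neg] at hw1
    rw [abs_neg] at hw2
    rw [hrw, abs_div]
    calc |l1 ^ j * (l2 * s.1.1 + (-a1) * s.1.1 + (-a2) * s.1.2)
            + l2 ^ j * ((-l1) * s.1.1 + a1 * s.1.1 + a2 * s.1.2)| / |l2 - l1|
        ≤ (|l1 ^ j * (l2 * s.1.1 + (-a1) * s.1.1 + (-a2) * s.1.2)|
            + |l2 ^ j * ((-l1) * s.1.1 + a1 * s.1.1 + a2 * s.1.2)|) / |l2 - l1| := by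
          gcongr
          exact abs_add_le _ _
      _ = (|l1| ^ j * |l2 * s.1.1 + (-a1) * s.1.1 + (-a2) * s.1.2|
            + |l2| ^ j * |(-l1) * s.1.1 + a1 * s.1.1 + a2 * s.1.2|) / |l2 - l1| := by
          rw [abs_mul, abs_mul, abs_pow, abs_pow]
      _ ≤ (q ^ j * (|l2| + |a1| + |a2|) + q ^ j * (|l1| + |a1| + |a2|)) / |l2 - l1| := by
          gcongr <;> first
            | exact abs_nonneg _
            | exact hgt.le
            | exact hw1
            | exact hw2
      _ = KC * q ^ j := by rw [hKCdef]; ring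
  -- continuity
  have hcx : Continuous (fun s : Sphere2 => s.1.1) := (continuous_fst.comp continuous_subtype_val)
  have hcy : Continuous (fun s : Sphere2 => s.1.2) := (continuous_snd.comp continuous_subtype_val)
  have hcA : ∀ j, Continuous (A3 a1 a2 a3 a4 l1 l2 j) := by
    intro j; unfold A3; fun_prop
  have hcB : ∀ j, Continuous (B3 a1 a2 a3 a4 l1 l2 j) := by
    intro j; unfold B3; fun_prop
  have hcC : ∀ j, Continuous (C3 a1 a2 a3 a4 l1 l2 j) := by
    intro j; unfold C3; fun_prop
  have hcont : ∀ (c : ℝ) (j : ℕ), Continuous (fun s : Sphere2 =>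
      C3 a1 a2 a3 a4 l1 l2 j s * spow (A3 a1 a2 a3 a4 l1 l2 j s + c * B3 a1 a2 a3 a4 l1 l2 j s) (α - 1)) :=
    fun c j => (hcC j).mul ((continuous_spow hp).comp ((hcA j).add (continuous_const.mul (hcB j))))
  -- the auxiliary function G
  set G : ℕ → ℝ := fun h => ∑' j : ℕ, ∫ s,
      C3 a1 a2 a3 a4 l1 l2 j s * spow (A3 a1 a2 a3 a4 l1 l2 j s + r ^ h * B3 a1 a2 a3 a4 l1 l2 j s) (α - 1) ∂Γ
    with hGdef
  -- factorization of CV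
  have hCV : ∀ h : ℕ, CVpos Γ α a1 a2 a3 a4 l1 l2 h = spow (l1 ^ h) (α - 1) * G h := by
    intro h
    rw [hGdef]
    rw [← tsum_mul_left]
    unfold CVpos
    apply tsum_congr
    intro j
    rw [← integral_const_mul]
    congr 1
    funext s
    rw [hl2h h]
    have hfact : l1 ^ h * A3 a1 a2 a3 a4 l1 l2 j s + l1 ^ h * r ^ h * B3 a1 a2 a3 a4 l1 l2 j s
        = l1 ^ h * (A3 a1 a2 a3 a4 l1 l2 j s + r ^ h * B3 a1 a2 a3 a4 l1 l2 j s) := by ring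
    rw [hfact, spow_mul]
    ring
  -- key pointwise bound for G type integrands
  set CB : ℝ := KC * (KA + KB) ^ (α - 1) with hCBdef
  have hCB : 0 ≤ CB := mul_nonneg hKC (Real.rpow_nonneg (by linarith) _)
  have hqα0 : (0:ℝ) < q ^ α := Real.rpow_pos_of_pos hq0 α
  have hqα1 : q ^ α < 1 := Real.rpow_lt_one hq0.le hq1 (by linarith)
  have key_bound : ∀ (c : ℝ), |c| ≤ 1 → ∀ (j : ℕ) (s : Sphere2),
      |C3 a1 a2 a3 a4 l1 l2 j s * spow (A3 a1 a2 a3 a4 l1 l2 j s + c * B3 a1 a2 a3 a4 l1 l2 j s) (α - 1)|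
        ≤ CB * (q ^ α) ^ j := by
    intro c hc j s
    rw [abs_mul]
    have h2 : |A3 a1 a2 a3 a4 l1 l2 j s + c * B3 a1 a2 a3 a4 l1 l2 j s| ≤ (KA + KB) * q ^ j := by
      calc |A3 a1 a2 a3 a4 l1 l2 j s + c * B3 a1 a2 a3 a4 l1 l2 j s|
          ≤ |A3 a1 a2 a3 a4 l1 l2 j s| + |c| * |B3 a1 a2 a3 a4 l1 l2 j s| := by
            rw [← abs_mul]; exact abs_add_le _ _
        _ ≤ KA * q ^ j + 1 * (KB * q ^ j) := by
            gcongr <;> first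
              | exact abs_nonneg _
              | exact hA j s
              | exact hB j s
              | exact hc
        _ = (KA + KB) * q ^ j := by ring
    have h3 : |spow (A3 a1 a2 a3 a4 l1 l2 j s + c * B3 a1 a2 a3 a4 l1 l2 j s) (α - 1)|
        ≤ ((KA + KB) * q ^ j) ^ (α - 1) :=
      (abs_spow_le _ _).trans (Real.rpow_le_rpow (abs_nonneg _) h2 hp.le)
    calc |C3 a1 a2 a3 a4 l1 l2 j s| * |spow (A3 a1 a2 a3 a4 l1 l2 j s + c * B3 a1 a2 a3 a4 l1 l2 j s) (α - 1)|
        ≤ (KC * q ^ j) * ((KA + KB) * q ^ j) ^ (α - 1) := by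
          apply mul_le_mul (hC j s) h3 (abs_nonneg _) (by positivity)
      _ = CB * (q ^ α) ^ j := by
          have hqq : ((q : ℝ) ^ j) ^ α = (q ^ j) ^ (α - 1) * q ^ j := by
            rw [← Real.rpow_add_one (hqj0 j).ne' (α - 1), sub_add_cancel]
          rw [Real.mul_rpow (by linarith : (0:ℝ) ≤ KA + KB) (hqj0 j).le, hCBdef,
            ← pow_rpow_comm hq0.le α j, hqq]
          ring
  set ΓR : ℝ := (Γ Set.univ).toReal with hΓRdef
  have hΓR : 0 ≤ ΓR := ENNReal.toReal_nonneg
  -- G tends to D7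
  have hGlim : Tendsto G atTop (𝓝 (D7 Γ α a1 a2 a3 a4 l1 l2)) := by
    rw [hGdef]
    unfold D7
    apply tendsto_tsum_of_dominated_convergence (bound := fun j : ℕ => (CB * ΓR) * (q ^ α) ^ j)
    · exact (summable_geometric_of_lt_one hqα0.le hqα1).mul_left _
    · intro j
      apply tendsto_integral_of_dominated_convergence (bound := fun _ : Sphere2 => CB * (q ^ α) ^ j)
      · exact fun h => (hcont (r ^ h) j).aestronglyMeasurable
      · exact integrable_const _
      · intro h
        apply Eventually.of_forall
        intro s
        rw [Real.norm_eq_abs]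
        exact key_bound (r ^ h) (by rw [abs_pow]; exact pow_le_one₀ (abs_nonneg r) hrabs.le) j s
      · apply Eventually.of_forall
        intro s
        have hr0 : Tendsto (fun h : ℕ => r ^ h) atTop (𝓝 0) :=
          tendsto_pow_atTop_nhds_zero_of_abs_lt_one hrabs
        have h1 : Tendsto (fun h : ℕ => A3 a1 a2 a3 a4 l1 l2 j s + r ^ h * B3 a1 a2 a3 a4 l1 l2 j s)
            atTop (𝓝 (A3 a1 a2 a3 a4 l1 l2 j s)) := by
          have := (tendsto_const_nhds :
              Tendsto (fun _ : ℕ => A3 a1 a2 a3 a4 l1 l2 j s) atTop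
                (𝓝 (A3 a1 a2 a3 a4 l1 l2 j s))).add
            (hr0.mul_const (B3 a1 a2 a3 a4 l1 l2 j s))
          simpa using this
        exact (((continuous_spow hp).tendsto _).comp h1).const_mul _
    · apply Eventually.of_forall
      intro h j
      rw [Real.norm_eq_abs]
      have := norm_integral_le_of_norm_le_const (μ := Γ)
        (f := fun s => C3 a1 a2 a3 a4 l1 l2 j s * spow (A3 a1 a2 a3 a4 l1 l2 j s + r ^ h * B3 a1 a2 a3 a4 l1 l2 j s) (α - 1))
        (C := CB * (q ^ α) ^ j)
        (Eventually.of_forall (fun s => by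
          rw [Real.norm_eq_abs]
          exact key_bound (r ^ h) (by rw [abs_pow]; exact pow_le_one₀ (abs_nonneg r) hrabs.le) j s))
      rw [Real.norm_eq_abs] at this
      calc |∫ s, C3 a1 a2 a3 a4 l1 l2 j s * spow (A3 a1 a2 a3 a4 l1 l2 j s + r ^ h * B3 a1 a2 a3 a4 l1 l2 j s) (α - 1) ∂Γ|
          ≤ CB * (q ^ α) ^ j * ΓR := this
        _ = (CB * ΓR) * (q ^ α) ^ j := by ring
  -- bound on CD
  set KU : ℝ := KA + KB with hKUdef
  set KV : ℝ := 2 * KC + KA + KB with hKVdef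
  have hKU : 0 ≤ KU := by rw [hKUdef]; linarith
  have hKV : 0 ≤ KV := by rw [hKVdef]; linarith
  set CC : ℝ := (KU ^ (α - 1) + α * KV ^ (α - 1)) * KU with hCCdef
  have hCC : 0 ≤ CC := by
    apply mul_nonneg _ hKU
    have := Real.rpow_nonneg hKU (α - 1)
    have := Real.rpow_nonneg hKV (α - 1)
    nlinarith
  have hCDptwise : ∀ (h j : ℕ) (s : Sphere2),
      |(|l1 ^ h * A3 a1 a2 a3 a4 l1 l2 j s + l2 ^ h * B3 a1 a2 a3 a4 l1 l2 j s| ^ α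
        + |C3 a1 a2 a3 a4 l1 l2 j s| ^ α
        - |C3 a1 a2 a3 a4 l1 l2 j s - (l1 ^ h * A3 a1 a2 a3 a4 l1 l2 j s + l2 ^ h * B3 a1 a2 a3 a4 l1 l2 j s)| ^ α)|
        ≤ (CC * q ^ h) * q ^ j := by
    intro h j s
    set u : ℝ := l1 ^ h * A3 a1 a2 a3 a4 l1 l2 j s + l2 ^ h * B3 a1 a2 a3 a4 l1 l2 j s with hudef
    set v : ℝ := C3 a1 a2 a3 a4 l1 l2 j s with hvdef
    have hu : |u| ≤ KU * q ^ j * q ^ h := by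
      rw [hudef]
      calc |l1 ^ h * A3 a1 a2 a3 a4 l1 l2 j s + l2 ^ h * B3 a1 a2 a3 a4 l1 l2 j s|
          ≤ |l1| ^ h * |A3 a1 a2 a3 a4 l1 l2 j s| + |l2| ^ h * |B3 a1 a2 a3 a4 l1 l2 j s| := by
            rw [← abs_pow, ← abs_pow, ← abs_mul, ← abs_mul]; exact abs_add_le _ _
        _ ≤ q ^ h * (KA * q ^ j) + q ^ h * (KB * q ^ j) := by
            gcongr <;> first
              | exact abs_nonneg _
              | exact hA j s
              | exact hgt.le
              | exact hB j s
        _ = KU * q ^ j * q ^ h := by rw [hKUdef]; ring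
    have hu1 : |u| ≤ KU := by
      calc |u| ≤ KU * q ^ j * q ^ h := hu
        _ ≤ KU * 1 * 1 := by gcongr <;> [exact hqj1 j; exact hqj1 h]
        _ = KU := by ring
    have hv : |v| ≤ KC * q ^ j := hC j s
    have term1 : |u| ^ α ≤ KU ^ (α - 1) * |u| := by
      rcases eq_or_ne u 0 with hu0 | hu0
      · simp [hu0, Real.zero_rpow (by linarith : α ≠ 0)]
      · have : |u| ^ α = |u| ^ (α - 1) * |u| := by
          rw [← Real.rpow_add_one (abs_ne_zero.2 hu0) (α - 1), sub_add_cancel]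
        rw [this]
        exact mul_le_mul_of_nonneg_right (Real.rpow_le_rpow (abs_nonneg u) hu1 hp.le) (abs_nonneg u)
    have term2 : |(|v| ^ α - |v - u| ^ α)| ≤ α * KV ^ (α - 1) * |u| := by
      have h0 := abs_rpow_sub_rpow_le (abs_nonneg v) (abs_nonneg (v - u)) hα1.le
      have hs : |(|v| - |v - u|)| ≤ |u| := by
        have := abs_abs_sub_abs_le_abs_sub v (v - u)
        simpa using this
      have hsum : |v| + |v - u| ≤ KV := by
        have : |v - u| ≤ |v| + |u| := abs_sub _ _
        have h1 : |v| ≤ KC := by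
          calc |v| ≤ KC * q ^ j := hv
            _ ≤ KC * 1 := by gcongr; exact hqj1 j
            _ = KC := by ring
        rw [hKVdef, hKUdef] at *
        nlinarith
      calc |(|v| ^ α - |v - u| ^ α)| ≤ α * (|v| + |v - u|) ^ (α - 1) * |(|v| - |v - u|)| := h0
        _ ≤ α * KV ^ (α - 1) * |u| := by
            gcongr <;> first
              | linarith
              | exact hs
              | exact Real.rpow_le_rpow (by positivity) hsum hp.le
    calc |(|u| ^ α + |v| ^ α - |v - u| ^ α)|
        = |(|u| ^ α + (|v| ^ α - |v - u| ^ α))| := by ring_nf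
      _ ≤ |(|u| ^ α)| + |(|v| ^ α - |v - u| ^ α)| := abs_add_le _ _
      _ = |u| ^ α + |(|v| ^ α - |v - u| ^ α)| := by
          rw [abs_of_nonneg (Real.rpow_nonneg (abs_nonneg u) α)]
      _ ≤ KU ^ (α - 1) * |u| + α * KV ^ (α - 1) * |u| := add_le_add term1 term2
      _ = (KU ^ (α - 1) + α * KV ^ (α - 1)) * |u| := by ring
      _ ≤ (KU ^ (α - 1) + α * KV ^ (α - 1)) * (KU * q ^ j * q ^ h) := by
          apply mul_le_mul_of_nonneg_left hu
          have := Real.rpow_nonneg hKU (α - 1)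
          have := Real.rpow_nonneg hKV (α - 1)
          nlinarith
      _ = (CC * q ^ h) * q ^ j := by rw [hCCdef]; ring
  set C5 : ℝ := ΓR * CC * (1 - q)⁻¹ with hC5def
  have hCD : ∀ h : ℕ, |CDpos Γ α a1 a2 a3 a4 l1 l2 h| ≤ C5 * q ^ h := by
    intro h
    unfold CDpos
    have hb := abs_tsum_le_of_le
      (f := fun j : ℕ => ∫ s,
        (|l1 ^ h * A3 a1 a2 a3 a4 l1 l2 j s + l2 ^ h * B3 a1 a2 a3 a4 l1 l2 j s| ^ α
          + |C3 a1 a2 a3 a4 l1 l2 j s| ^ α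
          - |C3 a1 a2 a3 a4 l1 l2 j s - (l1 ^ h * A3 a1 a2 a3 a4 l1 l2 j s + l2 ^ h * B3 a1 a2 a3 a4 l1 l2 j s)| ^ α) ∂Γ)
      (g := fun j : ℕ => ((CC * q ^ h) * ΓR) * q ^ j)
      (fun j => by
        have := norm_integral_le_of_norm_le_const (μ := Γ)
          (f := fun s =>
            (|l1 ^ h * A3 a1 a2 a3 a4 l1 l2 j s + l2 ^ h * B3 a1 a2 a3 a4 l1 l2 j s| ^ α
              + |C3 a1 a2 a3 a4 l1 l2 j s| ^ α
              - |C3 a1 a2 a3 a4 l1 l2 j s - (l1 ^ h * A3 a1 a2 a3 a4 l1 l2 j s + l2 ^ h * B3 a1 a2 a3 a4 l1 l2 j s)| ^ α))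
          (C := (CC * q ^ h) * q ^ j)
          (Eventually.of_forall (fun s => by
            rw [Real.norm_eq_abs]
            exact hCDptwise h j s))
        rw [Real.norm_eq_abs] at this
        calc |∫ s, (|l1 ^ h * A3 a1 a2 a3 a4 l1 l2 j s + l2 ^ h * B3 a1 a2 a3 a4 l1 l2 j s| ^ α
              + |C3 a1 a2 a3 a4 l1 l2 j s| ^ α
              - |C3 a1 a2 a3 a4 l1 l2 j s - (l1 ^ h * A3 a1 a2 a3 a4 l1 l2 j s + l2 ^ h * B3 a1 a2 a3 a4 l1 l2 j s)| ^ α) ∂Γ|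
            ≤ (CC * q ^ h) * q ^ j * ΓR := this
          _ = ((CC * q ^ h) * ΓR) * q ^ j := by ring)
      ((summable_geometric_of_lt_one hq0.le hq1).mul_left _)
    calc |∑' j : ℕ, ∫ s,
          (|l1 ^ h * A3 a1 a2 a3 a4 l1 l2 j s + l2 ^ h * B3 a1 a2 a3 a4 l1 l2 j s| ^ α
            + |C3 a1 a2 a3 a4 l1 l2 j s| ^ α
            - |C3 a1 a2 a3 a4 l1 l2 j s - (l1 ^ h * A3 a1 a2 a3 a4 l1 l2 j s + l2 ^ h * B3 a1 a2 a3 a4 l1 l2 j s)| ^ α) ∂Γ|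
        ≤ ∑' j : ℕ, ((CC * q ^ h) * ΓR) * q ^ j := hb
      _ = ((CC * q ^ h) * ΓR) * (1 - q)⁻¹ := by
          rw [tsum_mul_left, tsum_geometric_of_lt_one hq0.le hq1]
      _ = C5 * q ^ h := by rw [hC5def]; ring
  -- eventual nonvanishing
  have hGne : ∀ᶠ h : ℕ in atTop, G h ≠ 0 := hGlim.eventually_ne hD7
  have hCVne : ∀ᶠ h : ℕ in atTop, CVpos Γ α a1 a2 a3 a4 l1 l2 h ≠ 0 := by
    filter_upwards [hGne] with h hG
    rw [hCV h]
    exact mul_ne_zero (spow_ne_zero (pow_ne_zero h hl1ne)) hG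
  refine ⟨hCVne, ?_⟩
  -- the squeeze
  set e : ℝ := q ^ (2 - α) with hedef
  have he0 : 0 ≤ e := (Real.rpow_pos_of_pos hq0 _).le
  have he1 : e < 1 := Real.rpow_lt_one hq0.le hq1 (by linarith)
  have habsq : ∀ h : ℕ, |spow (l1 ^ h) (α - 1)| = (q ^ h) ^ (α - 1) := by
    intro h
    rw [abs_spow_of_ne_zero (pow_ne_zero h hl1ne), abs_pow]
  have hkey : ∀ h : ℕ, C5 * q ^ h = (C5 * e ^ h) * (q ^ h) ^ (α - 1) := by
    intro h
    have h1 : e ^ h * (q ^ h) ^ (α - 1) = q ^ h := by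
      rw [hedef, ← pow_rpow_comm hq0.le (2 - α) h,
        ← Real.rpow_add (hqj0 h), show (2 - α) + (α - 1) = 1 by ring, Real.rpow_one]
    calc C5 * q ^ h = C5 * (e ^ h * (q ^ h) ^ (α - 1)) := by rw [h1]
      _ = (C5 * e ^ h) * (q ^ h) ^ (α - 1) := by ring
  have hbound : ∀ᶠ h : ℕ in atTop,
      ‖CDpos Γ α a1 a2 a3 a4 l1 l2 h / CVpos Γ α a1 a2 a3 a4 l1 l2 h‖ ≤ (C5 * e ^ h) / |G h| := by
    filter_upwards [hGne] with h hG
    rw [Real.norm_eq_abs, abs_div, hCV h, abs_mul, habsq h]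
    have hpos1 : (0:ℝ) < (q ^ h) ^ (α - 1) := Real.rpow_pos_of_pos (hqj0 h) _
    have hpos2 : (0:ℝ) < |G h| := abs_pos.2 hG
    rw [div_le_div_iff₀ (by positivity) hpos2]
    calc |CDpos Γ α a1 a2 a3 a4 l1 l2 h| * |G h|
        ≤ ((C5 * e ^ h) * (q ^ h) ^ (α - 1)) * |G h| :=
          mul_le_mul_of_nonneg_right ((hCD h).trans (le_of_eq (hkey h))) (abs_nonneg _)
      _ = C5 * e ^ h * ((q ^ h) ^ (α - 1) * |G h|) := by ring
  apply squeeze_zero_norm' hbound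
  have hnum : Tendsto (fun h : ℕ => C5 * e ^ h) atTop (𝓝 (C5 * 0)) :=
    (tendsto_pow_atTop_nhds_zero_of_lt_one he0 he1).const_mul C5
  have hden : Tendsto (fun h : ℕ => |G h|) atTop (𝓝 |D7 Γ α a1 a2 a3 a4 l1 l2|) := hGlim.abs
  have hlim := hnum.div hden (abs_ne_zero.2 hD7)
  rw [mul_zero, zero_div] at hlim
  exact hlim
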